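/- Deterministic trajectory-tracking (envelope) lemma. Let Δ ≥ 0 and τ ∈ (0, 1]. Let S̄ = (F̄, Ḡ) : ℝ² → ℝ² be a map such that: (i) S̄(ζ) ∈ 𝔾 for all ζ ∈ 𝔾; (ii) F̄ and Ḡ are differentiable at every point of the ℓ∞-fattening 𝔹_∞(𝔾; Δ/τ) = {x ∈ ℝ² : ‖x − v‖_∞ ≤ Δ/τ for some v ∈ 𝔾}, and at every (α, β) ∈ 𝔹_∞(𝔾; Δ/τ) one has |∂F̄/∂α| + |∂F̄/∂β| ≤ 1 − τ and |∂Ḡ/∂α| + |∂Ḡ/∂β| ≤ 1 − τ. Let T ∈ ℕ and let ζ₀, ζ₁, …, ζ_T ∈ ℝ² satisfy ζ₀ ∈ 𝔾 and ‖ζ_{t+1} − S̄(ζ_t)‖_∞ ≤ Δ for every 0 ≤ t ≤ T − 1. Then max_{0 ≤ t ≤ T} ‖ζ_t − S̄^t(ζ₀)‖_∞ ≤ Δ/τ. -/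

import Mathlib

/-- The good region `𝔾 = {(α, β) : 0.55 ≤ α ≤ 1.05, 0 ≤ β ≤ α/5}` (a convex subset of ℝ²). -/
def goodRegion : Set (ℝ × ℝ) :=
  {p | 0.55 ≤ p.1 ∧ p.1 ≤ 1.05 ∧ 0 ≤ p.2 ∧ p.2 ≤ p.1 / 5}

lemma envelope_opnorm_le_sum (L : ℝ × ℝ →L[ℝ] ℝ) : ‖L‖ ≤ |L (1,0)| + |L (0,1)| := by
  refine L.opNorm_le_bound (by positivity) ?_
  intro v
  have hv : v = v.1 • ((1:ℝ),(0:ℝ)) + v.2 • ((0:ℝ),(1:ℝ)) := by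
    simp [Prod.ext_iff]
  have h1 : |v.1| ≤ ‖v‖ := by simpa [Real.norm_eq_abs] using norm_fst_le v
  have h2 : |v.2| ≤ ‖v‖ := by simpa [Real.norm_eq_abs] using norm_snd_le v
  calc ‖L v‖ = |v.1 * L (1,0) + v.2 * L (0,1)| := by
        conv_lhs => rw [hv, map_add, map_smul, map_smul]
        simp [Real.norm_eq_abs, smul_eq_mul]
    _ ≤ |v.1| * |L (1,0)| + |v.2| * |L (0,1)| :=
        (abs_add_le _ _).trans (by rw [abs_mul, abs_mul])
    _ ≤ ‖v‖ * |L (1,0)| + ‖v‖ * |L (0,1)| :=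
        add_le_add (mul_le_mul_of_nonneg_right h1 (abs_nonneg _))
          (mul_le_mul_of_nonneg_right h2 (abs_nonneg _))
    _ = (|L (1,0)| + |L (0,1)|) * ‖v‖ := by ring

/-- Deterministic trajectory-tracking (envelope) lemma.  The norm on `ℝ × ℝ` is the
sup (ℓ∞) norm. -/
theorem envelope_tracking_lemma (Δ τ : ℝ) (hΔ : 0 ≤ Δ) (hτ0 : 0 < τ) (hτ1 : τ ≤ 1)
    (Fb Gb : ℝ × ℝ → ℝ) (Sb : ℝ × ℝ → ℝ × ℝ) (hSb : ∀ p, Sb p = (Fb p, Gb p))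
    (hfaith : ∀ ζ ∈ goodRegion, Sb ζ ∈ goodRegion)
    (hF : ∀ p : ℝ × ℝ, (∃ v ∈ goodRegion, ‖p - v‖ ≤ Δ / τ) →
      DifferentiableAt ℝ Fb p ∧
        |fderiv ℝ Fb p (1, 0)| + |fderiv ℝ Fb p (0, 1)| ≤ 1 - τ)
    (hG : ∀ p : ℝ × ℝ, (∃ v ∈ goodRegion, ‖p - v‖ ≤ Δ / τ) →
      DifferentiableAt ℝ Gb p ∧
        |fderiv ℝ Gb p (1, 0)| + |fderiv ℝ Gb p (0, 1)| ≤ 1 - τ)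
    (T : ℕ) (ζ : ℕ → ℝ × ℝ) (hζ0 : ζ 0 ∈ goodRegion)
    (hstep : ∀ t : ℕ, t < T → ‖ζ (t + 1) - Sb (ζ t)‖ ≤ Δ) :
    ∀ t : ℕ, t ≤ T → ‖ζ t - Sb^[t] (ζ 0)‖ ≤ Δ / τ := by
  have hΔτ : 0 ≤ Δ / τ := div_nonneg hΔ hτ0.le
  -- the key Lipschitz estimate near the good region
  have key : ∀ q ∈ goodRegion, ∀ p : ℝ × ℝ, ‖p - q‖ ≤ Δ / τ →
      ‖Sb p - Sb q‖ ≤ (1 - τ) * ‖p - q‖ := by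
    intro q hq p hp
    set s : Set (ℝ × ℝ) := Metric.closedBall q (Δ / τ) with hs
    have hmem : ∀ x ∈ s, ∃ v ∈ goodRegion, ‖x - v‖ ≤ Δ / τ := by
      intro x hx
      exact ⟨q, hq, by simpa [hs, mem_closedBall_iff_norm, dist_eq_norm] using hx⟩
    have hps : p ∈ s := by simpa [hs, mem_closedBall_iff_norm, dist_eq_norm] using hp
    have hqs : q ∈ s := by simp [hs, hΔτ]
    have hFl : ‖Fb p - Fb q‖ ≤ (1 - τ) * ‖p - q‖ := by
      refine Convex.norm_image_sub_le_of_norm_fderiv_le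
        (fun x hx => (hF x (hmem x hx)).1)
        (fun x hx => (envelope_opnorm_le_sum _).trans (hF x (hmem x hx)).2)
        (convex_closedBall _ _) hqs hps
    have hGl : ‖Gb p - Gb q‖ ≤ (1 - τ) * ‖p - q‖ := by
      refine Convex.norm_image_sub_le_of_norm_fderiv_le
        (fun x hx => (hG x (hmem x hx)).1)
        (fun x hx => (envelope_opnorm_le_sum _).trans (hG x (hmem x hx)).2)
        (convex_closedBall _ _) hqs hps
    have : Sb p - Sb q = (Fb p - Fb q, Gb p - Gb q) := by
      rw [hSb, hSb]; rfl
    rw [this, Prod.norm_def]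
    exact max_le hFl hGl
  -- iterates stay in the good region
  have hgood : ∀ t : ℕ, Sb^[t] (ζ 0) ∈ goodRegion := by
    intro t
    induction t with
    | zero => simpa using hζ0
    | succ n ih => rw [Function.iterate_succ_apply']; exact hfaith _ ih
  intro t
  induction t with
  | zero => intro _; simpa using hΔτ
  | succ n ih =>
    intro hnT
    have hn : n ≤ T := n.le_succ.trans hnT
    have hd : ‖ζ n - Sb^[n] (ζ 0)‖ ≤ Δ / τ := ih hn
    have hlip : ‖Sb (ζ n) - Sb (Sb^[n] (ζ 0))‖ ≤ (1 - τ) * ‖ζ n - Sb^[n] (ζ 0)‖ :=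
      key _ (hgood n) _ hd
    have hst : ‖ζ (n + 1) - Sb (ζ n)‖ ≤ Δ := hstep n (Nat.lt_of_succ_le hnT)
    calc ‖ζ (n + 1) - Sb^[n + 1] (ζ 0)‖
        = ‖(ζ (n + 1) - Sb (ζ n)) + (Sb (ζ n) - Sb (Sb^[n] (ζ 0)))‖ := by
          rw [Function.iterate_succ_apply']; congr 1; abel
      _ ≤ ‖ζ (n + 1) - Sb (ζ n)‖ + ‖Sb (ζ n) - Sb (Sb^[n] (ζ 0))‖ := norm_add_le _ _
      _ ≤ Δ + (1 - τ) * (Δ / τ) := by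
          refine add_le_add hst (hlip.trans ?_)
          exact mul_le_mul_of_nonneg_left hd (by linarith)
      _ = Δ / τ := by field_simp; ring
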